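/- Composition of resilient blocks: let a protocol consist of two sequential blocks B₁ and B₂, where for every coalition K with |K| ≤ k, deviating in B₁ yields expected utility at most the utility of conforming (given solution preference in B₂), and deviating in B₂ given equal inputs yields utility at most conforming. Then no coalition of size ≤ k can strictly increase its expected utility by deviating in the composed protocol. -/
import Mathlib


/-- Composition of resilient blocks: strategies are pairs (behaviour in `B₁`, behaviour in
`B₂`). If any coalition deviation gains at most as much as the deviation that conforms in
`B₁` (keeping the `B₂` behaviour), and any deviation that conforms in `B₁` gains at most
the fully conforming profile, then no coalition of size `≤ k` can strictly increase any
member's expected utility by deviating in the composed protocol. -/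
theorem composition_k_resilient {P S₁ S₂ : Type*} [Fintype P] (k : ℕ)
    (σ : P → S₁ × S₂) (u : (P → S₁ × S₂) → P → ℝ)
    (H1 : ∀ (K : Finset P), K.card ≤ k → ∀ τ : P → S₁ × S₂,
      (∀ j ∉ K, τ j = σ j) → ∀ j ∈ K, u τ j ≤ u (fun i => ((σ i).1, (τ i).2)) j)
    (H2 : ∀ (K : Finset P), K.card ≤ k → ∀ τ : P → S₁ × S₂,
      (∀ j ∉ K, τ j = σ j) → (∀ i, (τ i).1 = (σ i).1) → ∀ j ∈ K, u τ j ≤ u σ j) :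
    ∀ (K : Finset P), K.card ≤ k → ∀ τ : P → S₁ × S₂,
      (∀ j ∉ K, τ j = σ j) → ∀ j ∈ K, u τ j ≤ u σ j := by
  intro K hK τ hτ j hj
  refine (H1 K hK τ hτ j hj).trans (H2 K hK (fun i => ((σ i).1, (τ i).2)) ?_ (fun i => rfl) j hj)
  intro i hi
  show ((σ i).1, (τ i).2) = σ i
  rw [hτ i hi]
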